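/- arXiv:2304.08358 — 2 statements merged into one kernel-verified Lean document; each statement's English description precedes it below -/
import Mathlib

section
/- Let C ∈ ℝ and let λ and η be signed Borel measures on S¹ with T_#λ = −λ and T_#η = −η. If ∫_{S¹} d_{S¹}(x,y) (λ + C·H¹)(dy) = ∫_{S¹} d_{S¹}(x,y) (η + C·H¹)(dy) for all x ∈ S¹, then λ = η. -/
open MeasureTheory Real Filter Set Complex
open scoped ENNReal NNReal Classical

noncomputable section

instance : MeasurableSpace Circle := borel Circle
instance : BorelSpace Circle := ⟨rfl⟩

namespace CirclePaper

/-- The spherical (arc-length) distance on the unit circle `S¹ ⊆ ℝ² ≃ ℂ`: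
`d_{S¹}(x,y) = arccos ⟨x,y⟩ = arccos (Re (x * conj y))`. -/
def dS1 (x y : Circle) : ℝ := Real.arccos (((x : ℂ) * (starRingEnd ℂ) (y : ℂ)).re)

/-- The antipodal map `T x = -x` (multiplication by `exp(iπ) = -1`). -/
def antipode (x : Circle) : Circle := Circle.exp π * x

/-- Integral of a function against a signed measure (via the Jordan decomposition). -/
def sInt (l : SignedMeasure Circle) (f : Circle → ℝ) : ℝ :=
  (∫ y, f y ∂l.toJordanDecomposition.posPart) - (∫ y, f y ∂l.toJordanDecomposition.negPart)

/-- `f_λ(x) = ∫_{S¹} d_{S¹}(x,y) λ(dy)`. -/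
def fRep (l : SignedMeasure Circle) (x : Circle) : ℝ := sInt l (fun y => dS1 x y)

/-- `f : S¹ → ℝ` has left derivative `L` at `x` w.r.t. the covering `q(t) = exp(it)`,
i.e. `(f(x +_q t) - f(x))/t → L` as `t → 0⁻`. -/
def HasLeftDerivCircleAt (f : Circle → ℝ) (L : ℝ) (x : Circle) : Prop :=
  Filter.Tendsto (fun t : ℝ => (f (Circle.exp t * x) - f x) / t)
    (nhdsWithin 0 (Set.Iio 0)) (nhds L)

/-- `h : ℝ → ℝ` has left derivative `L` at `t`: `(h(t+s) - h(t))/s → L` as `s → 0⁻`. -/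
def HasLeftDerivAtR (h : ℝ → ℝ) (L : ℝ) (t : ℝ) : Prop :=
  Filter.Tendsto (fun s : ℝ => (h (t + s) - h t) / s)
    (nhdsWithin 0 (Set.Iio 0)) (nhds L)

/-- The total variation `‖g‖_{TV(S¹)}` of `g : S¹ → ℝ`: the supremum of
`Σ |g(q(t_i)) - g(q(t_{i+1}))|` over partitions `0 = t_0 ≤ … ≤ t_{n+1} = 2π`. -/
def circleTV (g : Circle → ℝ) : ℝ≥0∞ := eVariationOn (g ∘ Circle.exp) (Set.Icc 0 (2 * π))

/-- `f` is Lipschitz continuous with respect to the spherical distance. -/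
def LipschitzCircle (f : Circle → ℝ) : Prop := ∃ K : ℝ, ∀ x y, |f x - f y| ≤ K * dS1 x y

/-- The normalized Hausdorff 1-measure on `S¹`, i.e. the rotation-invariant Borel
probability measure (the pushforward of normalized Lebesgue measure on `[0, 2π)`). -/
def hausOne : Measure Circle :=
  (ENNReal.ofReal (2 * π))⁻¹ • Measure.map Circle.exp (volume.restrict (Set.Ico 0 (2 * π)))

instance : IsFiniteMeasure hausOne := by
  constructor
  have h1 : (Measure.map Circle.exp (volume.restrict (Set.Ico 0 (2 * π)))) Set.univ
      = volume (Set.Ico 0 (2 * π)) := by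
    rw [Measure.map_apply Circle.exp.continuous.measurable MeasurableSet.univ]
    simp
  simp only [hausOne, Measure.smul_apply, smul_eq_mul, h1, Real.volume_Ico]
  refine ENNReal.mul_lt_top ?_ ?_
  · exact ENNReal.inv_lt_top.mpr (ENNReal.ofReal_pos.mpr (by positivity))
  · exact ENNReal.ofReal_lt_top

/-- The half-open arc `[x, T(x)) = {x +_q t : t ∈ [0, π)}` of length `π` starting at `x`. -/
def halfArc (x : Circle) : Set Circle := (fun t : ℝ => Circle.exp t * x) '' Set.Ico 0 π

/-- A Borel measure on the circle, regarded as a signed measure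
(defined to be `0` if the measure is not finite). -/
def msigned (μ : Measure Circle) : SignedMeasure Circle :=
  if h : IsFiniteMeasure μ then @Measure.toSignedMeasure _ _ μ h else 0

/-!
Write `λ = λ⁺ - λ⁻`, `η = η⁺ - η⁻` (Jordan decompositions). The `C • H¹` terms cancel, so the
finite measures `A = λ⁺ + η⁻` and `B = η⁺ + λ⁻` have equal distance potentials
`∫ d(x, y) dA(y) = ∫ d(x, y) dB(y)`, and antisymmetry under `T` gives `T_#A + A = T_#B + B`.
Along the circle, the second difference of `x ↦ d(x, y)` with step `r` is twice the tent
`(r - d(x, y))⁺` minus twice the tent `(r - d(-x, y))⁺`. So the potentials determine the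
difference of the tent integrals of `A` at `x` and at `-x`, while the symmetry determines their
sum: the integrals of all tents `(r - d(x, ·))⁺`, `0 ≤ r ≤ π`, agree for `A` and `B`. Their right
derivative in `r` is the mass of the closed ball of radius `r`, so `A` and `B` agree on closed
balls, hence on all arcs, hence `A = B`, which is `λ = η`.
-/

section SignedMeasure

variable {X Y : Type*} [MeasurableSpace X] [MeasurableSpace Y]

lemma _root_.MeasureTheory.Measure.toSignedMeasure_map (μ : Measure X) [IsFiniteMeasure μ]
    {f : X → Y} (hf : Measurable f) : (μ.map f).toSignedMeasure = μ.toSignedMeasure.map f := by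
  ext i hi
  rw [VectorMeasure.map_apply _ hf hi, Measure.toSignedMeasure_apply_measurable hi,
    Measure.toSignedMeasure_apply_measurable (hf hi), map_measureReal_apply hf hi]

lemma _root_.MeasureTheory.SignedMeasure.posPart_sub_negPart (s : SignedMeasure X) :
    s.toJordanDecomposition.posPart.toSignedMeasure
      - s.toJordanDecomposition.negPart.toSignedMeasure = s :=
  s.toSignedMeasure_toJordanDecomposition

lemma map_posPart_add_posPart_of_map_eq_neg {s : SignedMeasure X} {f : X → X} (hf : Measurable f)
    (hs : s.map f = -s) :
    s.toJordanDecomposition.posPart.map f + s.toJordanDecomposition.posPart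
      = s.toJordanDecomposition.negPart.map f + s.toJordanDecomposition.negPart := by
  set P := s.toJordanDecomposition.posPart
  set N := s.toJordanDecomposition.negPart
  have hmap : P.toSignedMeasure.map f - N.toSignedMeasure.map f
      = N.toSignedMeasure - P.toSignedMeasure := by
    rw [← VectorMeasure.mapₗ_apply (R := ℝ), ← VectorMeasure.mapₗ_apply (R := ℝ), ← map_sub,
      VectorMeasure.mapₗ_apply, s.posPart_sub_negPart, hs, ← neg_sub, s.posPart_sub_negPart]
  rw [← Measure.toSignedMeasure_eq_toSignedMeasure_iff, Measure.toSignedMeasure_add,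
    Measure.toSignedMeasure_add, Measure.toSignedMeasure_map _ hf,
    Measure.toSignedMeasure_map _ hf]
  exact (sub_eq_sub_iff_add_eq_add.mp hmap).trans (add_comm _ _)

end SignedMeasure

open Topology

section Slope

variable {X : Type*} [MeasurableSpace X] {φ : X → ℝ}

lemma tendsto_integral_slope_max_sub (μ : Measure X) [IsFiniteMeasure μ] (hφ : Measurable φ)
    (r : ℝ) :
    Tendsto (fun ε => ∫ y, (max (r + ε - φ y) 0 - max (r - φ y) 0) / ε ∂μ) (𝓝[>] 0)
      (𝓝 (μ.real {y | φ y ≤ r})) := by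
  rw [← integral_indicator_one (measurableSet_le hφ measurable_const)]
  refine tendsto_integral_filter_of_dominated_convergence (fun _ => 1)
    (Eventually.of_forall fun ε => by fun_prop) ?_ (integrable_const 1) (ae_of_all _ fun y => ?_)
  · filter_upwards [self_mem_nhdsWithin] with ε (hε : 0 < ε)
    refine ae_of_all _ fun y => ?_
    have := abs_max_sub_max_le_abs (r + ε - φ y) (r - φ y) 0
    rw [show r + ε - φ y - (r - φ y) = ε by ring, abs_of_pos hε] at this
    rw [Real.norm_eq_abs, abs_div, abs_of_pos hε, div_le_one hε]
    exact this
  · by_cases hy : φ y ≤ r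
    · rw [indicator_of_mem (by exact hy), Pi.one_apply]
      refine tendsto_const_nhds.congr' ?_
      filter_upwards [self_mem_nhdsWithin] with ε (hε : 0 < ε)
      rw [max_eq_left (by linarith), max_eq_left (by linarith), add_sub_right_comm,
        add_sub_cancel_left, div_self hε.ne']
    · rw [indicator_of_notMem (by exact hy)]
      refine tendsto_const_nhds.congr' ?_
      filter_upwards [Ioo_mem_nhdsGT (show (0 : ℝ) < φ y - r by linarith)] with ε hε
      rw [max_eq_right (by linarith [hε.2]), max_eq_right (by linarith), sub_zero, zero_div]

lemma integrable_max_sub_of_nonneg (μ : Measure X) [IsFiniteMeasure μ] (hφ : Measurable φ)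
    (hφ₀ : ∀ y, 0 ≤ φ y) (t : ℝ) : Integrable (fun y => max (t - φ y) 0) μ :=
  Integrable.of_bound (by fun_prop) |t| (ae_of_all _ fun y => by
    rw [Real.norm_eq_abs, abs_of_nonneg (le_max_right _ _)]
    exact max_le (by linarith [hφ₀ y, le_abs_self t]) (abs_nonneg t))

lemma measure_le_eq_of_integral_max_sub_eq {μ ν : Measure X} [IsFiniteMeasure μ]
    [IsFiniteMeasure ν] (hφ : Measurable φ) (hφ₀ : ∀ y, 0 ≤ φ y) {r s : ℝ} (hrs : r < s)
    (h : ∀ t ∈ Icc r s, ∫ y, max (t - φ y) 0 ∂μ = ∫ y, max (t - φ y) 0 ∂ν) :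
    μ {y | φ y ≤ r} = ν {y | φ y ≤ r} := by
  have hslope : ∀ (ρ : Measure X) [IsFiniteMeasure ρ] (ε : ℝ),
      ∫ y, (max (r + ε - φ y) 0 - max (r - φ y) 0) / ε ∂ρ
        = ((∫ y, max (r + ε - φ y) 0 ∂ρ) - ∫ y, max (r - φ y) 0 ∂ρ) / ε := fun ρ _ ε => by
    rw [integral_div, integral_sub (integrable_max_sub_of_nonneg ρ hφ hφ₀ _)
      (integrable_max_sub_of_nonneg ρ hφ hφ₀ _)]
  have heq : (fun ε => ∫ y, (max (r + ε - φ y) 0 - max (r - φ y) 0) / ε ∂μ)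
      =ᶠ[𝓝[>] 0] fun ε => ∫ y, (max (r + ε - φ y) 0 - max (r - φ y) 0) / ε ∂ν := by
    filter_upwards [Ioo_mem_nhdsGT (sub_pos.mpr hrs)] with ε hε
    rw [hslope, hslope, h r ⟨le_rfl, hrs.le⟩, h (r + ε) ⟨by linarith [hε.1], by linarith [hε.2]⟩]
  rw [← measureReal_eq_measureReal_iff]
  exact tendsto_nhds_unique (tendsto_integral_slope_max_sub μ hφ r)
    ((tendsto_integral_slope_max_sub ν hφ r).congr' heq.symm)

end Slope

lemma arccos_cos_eq_abs {s : ℝ} (hs : |s| ≤ π) : Real.arccos (Real.cos s) = |s| := by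
  rw [← Real.cos_abs, Real.arccos_cos (abs_nonneg s) hs]

lemma arccos_cos_eq_two_pi_sub {s : ℝ} (h₁ : π ≤ s) (h₂ : s ≤ 2 * π) :
    Real.arccos (Real.cos s) = 2 * π - s := by
  rw [← Real.cos_two_pi_sub, Real.arccos_cos (by linarith) (by linarith)]

-- `arccos (cos s)` is the distance from `s` to `2πℤ`; its second difference is a tent at `0`
-- minus a tent at `π`.
lemma arccos_cos_add_add_arccos_cos_sub {s h : ℝ} (hs : |s| ≤ π) (h₀ : 0 ≤ h) (hπ : h ≤ π) :
    Real.arccos (Real.cos (s + h)) + Real.arccos (Real.cos (s - h))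
      + 2 * max (h - (π - Real.arccos (Real.cos s))) 0
    = 2 * max (h - Real.arccos (Real.cos s)) 0 + 2 * Real.arccos (Real.cos s) := by
  wlog hs₀ : 0 ≤ s generalizing s
  · have := this (s := -s) (by rwa [abs_neg]) (by linarith)
    rwa [show -s + h = -(s - h) by ring, show -s - h = -(s + h) by ring, Real.cos_neg,
      Real.cos_neg, Real.cos_neg, add_comm (Real.arccos _) (Real.arccos _)] at this
  rw [abs_of_nonneg hs₀] at hs
  have hsub : Real.arccos (Real.cos (s - h)) = |s - h| :=
    arccos_cos_eq_abs (abs_le.mpr ⟨by linarith, by linarith⟩)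
  have hadd : Real.arccos (Real.cos (s + h)) = min (s + h) (2 * π - (s + h)) := by
    rcases le_total (s + h) π with hsh | hsh
    · rw [Real.arccos_cos (by linarith) hsh, min_eq_left (by linarith)]
    · rw [arccos_cos_eq_two_pi_sub hsh (by linarith), min_eq_right (by linarith)]
  rw [Real.arccos_cos hs₀ hs, hsub, hadd]
  rcases abs_cases (s - h) with ⟨e₁, _⟩ | ⟨e₁, _⟩ <;>
    rcases min_cases (s + h) (2 * π - (s + h)) with ⟨e₂, _⟩ | ⟨e₂, _⟩ <;>
    rcases max_cases (h - (π - s)) 0 with ⟨e₃, _⟩ | ⟨e₃, _⟩ <;>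
    rcases max_cases (h - s) 0 with ⟨e₄, _⟩ | ⟨e₄, _⟩ <;>
    linarith

lemma dS1_eq_of_div_eq_exp {x y : Circle} {t : ℝ} (h : x / y = Circle.exp t) :
    dS1 x y = Real.arccos (Real.cos t) := by
  rw [dS1, ← Circle.coe_inv_eq_conj, ← Circle.coe_mul, ← div_eq_mul_inv, h, Circle.coe_exp,
    Complex.exp_ofReal_mul_I_re]

lemma dS1_eq_abs_arg (x y : Circle) : dS1 x y = |arg (x / y : Circle)| := by
  rw [dS1_eq_of_div_eq_exp (Circle.exp_arg _).symm,
    arccos_cos_eq_abs (abs_le.mpr ⟨(neg_pi_lt_arg _).le, arg_le_pi _⟩)]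

lemma dS1_exp_exp (s t : ℝ) : dS1 (Circle.exp s) (Circle.exp t) = Real.arccos (Real.cos (s - t)) :=
  dS1_eq_of_div_eq_exp (Circle.exp_sub s t).symm

lemma dS1_exp_mul (t : ℝ) (x y : Circle) :
    dS1 (Circle.exp t * x) y = Real.arccos (Real.cos (arg (x / y : Circle) + t)) := by
  refine dS1_eq_of_div_eq_exp ?_
  rw [Circle.exp_add, Circle.exp_arg, mul_div_assoc, mul_comm]

lemma dS1_nonneg (x y : Circle) : 0 ≤ dS1 x y := Real.arccos_nonneg _

lemma dS1_le_zero_iff {x y : Circle} : dS1 x y ≤ 0 ↔ y = x := by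
  rw [dS1_eq_abs_arg, abs_nonpos_iff, Circle.arg_eq_zero, div_eq_one, eq_comm]

@[fun_prop]
lemma continuous_dS1 (x : Circle) : Continuous (dS1 x) :=
  Real.continuous_arccos.comp (Complex.continuous_re.comp
    (continuous_const.mul (Complex.continuous_conj.comp continuous_subtype_val)))

lemma coe_antipode (x : Circle) : (antipode x : ℂ) = -(x : ℂ) := by
  rw [antipode, Circle.coe_mul, Circle.coe_exp, Complex.exp_pi_mul_I, neg_one_mul]

lemma dS1_antipode_left (x y : Circle) : dS1 (antipode x) y = π - dS1 x y := by
  rw [dS1, dS1, coe_antipode, neg_mul, Complex.neg_re, Real.arccos_neg]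

lemma dS1_antipode_right (x y : Circle) : dS1 x (antipode y) = π - dS1 x y := by
  rw [dS1, dS1, coe_antipode, map_neg, mul_neg, Complex.neg_re, Real.arccos_neg]

lemma measurable_antipode : Measurable antipode :=
  (continuous_const.mul continuous_id).measurable

lemma dS1_exp_mul_add_dS1_exp_neg_mul (x y : Circle) {h : ℝ} (h₀ : 0 ≤ h) (hπ : h ≤ π) :
    dS1 (Circle.exp h * x) y + dS1 (Circle.exp (-h) * x) y
      + 2 * max (h - dS1 (antipode x) y) 0
    = 2 * max (h - dS1 x y) 0 + 2 * dS1 x y := by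
  have hd : dS1 x y = Real.arccos (Real.cos (arg (x / y : Circle))) :=
    dS1_eq_of_div_eq_exp (Circle.exp_arg _).symm
  rw [dS1_exp_mul, dS1_exp_mul, dS1_antipode_left, hd, ← sub_eq_add_neg]
  exact arccos_cos_add_add_arccos_cos_sub (abs_le.mpr ⟨(neg_pi_lt_arg _).le, arg_le_pi _⟩) h₀ hπ

lemma integrable_of_continuous {f : Circle → ℝ} (hf : Continuous f) (μ : Measure Circle)
    [IsFiniteMeasure μ] : Integrable f μ :=
  hf.integrable_of_hasCompactSupport (HasCompactSupport.of_compactSpace f)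

lemma sInt_eq_integral_sub_integral {s : SignedMeasure Circle} {p n : Measure Circle}
    [IsFiniteMeasure p] [IsFiniteMeasure n] (hs : p.toSignedMeasure - n.toSignedMeasure = s)
    {f : Circle → ℝ} (hf : Continuous f) :
    sInt s f = (∫ y, f y ∂p) - ∫ y, f y ∂n := by
  have hbal : s.toJordanDecomposition.posPart.toSignedMeasure + n.toSignedMeasure
      = p.toSignedMeasure + s.toJordanDecomposition.negPart.toSignedMeasure := by
    rw [← sub_eq_sub_iff_add_eq_add, s.posPart_sub_negPart, hs]
  rw [← Measure.toSignedMeasure_add, ← Measure.toSignedMeasure_add,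
    Measure.toSignedMeasure_eq_toSignedMeasure_iff] at hbal
  have := congrArg (fun μ => ∫ y, f y ∂μ) hbal
  simp only [integral_add_measure (integrable_of_continuous hf _)
    (integrable_of_continuous hf _)] at this
  rw [sInt]
  linarith

lemma sInt_add (s t : SignedMeasure Circle) {f : Circle → ℝ} (hf : Continuous f) :
    sInt (s + t) f = sInt s f + sInt t f := by
  have hst : (s.toJordanDecomposition.posPart + t.toJordanDecomposition.posPart).toSignedMeasure
      - (s.toJordanDecomposition.negPart + t.toJordanDecomposition.negPart).toSignedMeasure
      = s + t := by
    rw [Measure.toSignedMeasure_add, Measure.toSignedMeasure_add, add_sub_add_comm,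
      s.posPart_sub_negPart, t.posPart_sub_negPart]
  rw [sInt_eq_integral_sub_integral hst hf, sInt, sInt,
    integral_add_measure (integrable_of_continuous hf _) (integrable_of_continuous hf _),
    integral_add_measure (integrable_of_continuous hf _) (integrable_of_continuous hf _)]
  ring

section FiniteMeasure

variable {A B : Measure Circle} [IsFiniteMeasure A] [IsFiniteMeasure B]

lemma two_mul_integral_tent_sub_integral_tent_antipode (μ : Measure Circle) [IsFiniteMeasure μ]
    (x : Circle) {r : ℝ} (hr₀ : 0 ≤ r) (hrπ : r ≤ π) :
    2 * ((∫ y, max (r - dS1 x y) 0 ∂μ) - ∫ y, max (r - dS1 (antipode x) y) 0 ∂μ)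
      = (∫ y, dS1 (Circle.exp r * x) y ∂μ) + (∫ y, dS1 (Circle.exp (-r) * x) y ∂μ)
        - 2 * ∫ y, dS1 x y ∂μ := by
  have hi : ∀ {f : Circle → ℝ}, Continuous f → Integrable f μ := fun hf =>
    integrable_of_continuous hf μ
  rw [← integral_sub (hi (by fun_prop)) (hi (by fun_prop)), ← integral_const_mul,
    ← integral_const_mul, ← integral_add (hi (by fun_prop)) (hi (by fun_prop)),
    ← integral_sub (hi (by fun_prop)) (hi (by fun_prop))]
  refine integral_congr_ae (ae_of_all _ fun y => ?_)
  have := dS1_exp_mul_add_dS1_exp_neg_mul x y hr₀ hrπ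
  linarith

lemma integral_tent_map_antipode (μ : Measure Circle) (x : Circle) (r : ℝ) :
    ∫ y, max (r - dS1 x y) 0 ∂(μ.map antipode) = ∫ y, max (r - dS1 (antipode x) y) 0 ∂μ := by
  rw [integral_map measurable_antipode.aemeasurable (by fun_prop)]
  simp only [dS1_antipode_left, dS1_antipode_right]

lemma integral_tent_eq_of_integral_dS1_eq
    (hT : A.map antipode + A = B.map antipode + B)
    (hd : ∀ z, ∫ y, dS1 z y ∂A = ∫ y, dS1 z y ∂B)
    (x : Circle) {r : ℝ} (hr₀ : 0 ≤ r) (hrπ : r ≤ π) :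
    ∫ y, max (r - dS1 x y) 0 ∂A = ∫ y, max (r - dS1 x y) 0 ∂B := by
  have hi : ∀ (μ : Measure Circle) [IsFiniteMeasure μ],
      Integrable (fun y => max (r - dS1 x y) 0) μ := fun μ _ =>
    integrable_of_continuous (by fun_prop) μ
  have hsum := congrArg (fun μ => ∫ y, max (r - dS1 x y) 0 ∂μ) hT
  simp only [integral_add_measure (hi _) (hi _), integral_tent_map_antipode] at hsum
  have hdiff_A := two_mul_integral_tent_sub_integral_tent_antipode A x hr₀ hrπ
  have hdiff_B := two_mul_integral_tent_sub_integral_tent_antipode B x hr₀ hrπ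
  rw [hd, hd, hd] at hdiff_A
  linarith

lemma setOf_arg_le_eq {a : ℝ} (ha₁ : -π < a) (ha₂ : a < π) :
    {y : Circle | arg (y : ℂ) ≤ a}
      = {y | dS1 (Circle.exp ((a - π) / 2)) y ≤ (a + π) / 2} \ {-1} := by
  ext y
  obtain ⟨t, ⟨ht₁, ht₂⟩, rfl⟩ := Circle.surjOn_exp_neg_pi_pi (mem_univ y)
  have hπ : Circle.exp t = -1 ↔ t = π := by
    rw [← Circle.arg_eq_arg, Circle.arg_exp ht₁ ht₂, Circle.coe_neg, Circle.coe_one, arg_neg_one]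
  simp only [mem_ofPred_eq, Set.mem_sdiff, mem_singleton_iff, hπ, Circle.arg_exp ht₁ ht₂,
    dS1_exp_exp]
  constructor
  · intro hta
    rw [arccos_cos_eq_abs (abs_le.mpr ⟨by linarith, by linarith⟩)]
    exact ⟨abs_le.mpr ⟨by linarith, by linarith⟩, by linarith⟩
  · rintro ⟨hd, hne⟩
    by_contra! hta
    rcases le_or_gt (-π) ((a - π) / 2 - t) with h | h
    · rw [arccos_cos_eq_abs (abs_le.mpr ⟨h, by linarith⟩)] at hd
      linarith [neg_abs_le ((a - π) / 2 - t)]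
    · rw [← Real.cos_add_two_pi, arccos_cos_eq_abs (abs_le.mpr ⟨by linarith, by linarith⟩)] at hd
      linarith [le_abs_self ((a - π) / 2 - t + 2 * π), lt_of_le_of_ne ht₂ hne]

lemma measurable_arg_coe : Measurable fun y : Circle => arg (y : ℂ) :=
  Complex.measurable_arg.comp (by fun_prop : Continuous fun y : Circle => (y : ℂ)).measurable

lemma map_exp_map_arg (μ : Measure Circle) :
    (μ.map fun y : Circle => arg (y : ℂ)).map Circle.exp = μ := by
  rw [Measure.map_map Circle.exp.continuous.measurable measurable_arg_coe,
    show (Circle.exp ∘ fun y : Circle => arg (y : ℂ)) = id from funext Circle.exp_arg,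
    Measure.map_id]

-- The arcs `{y | arg y ≤ a}` are closed balls minus the point `-1`, itself a ball of radius `0`.
lemma eq_of_measure_dS1_le_eq (huniv : A univ = B univ)
    (hball : ∀ x, ∀ r ∈ Ico 0 π, A {y | dS1 x y ≤ r} = B {y | dS1 x y ≤ r}) : A = B := by
  rw [← map_exp_map_arg A, ← map_exp_map_arg B]
  congr 1
  refine Measure.ext_of_Iic _ _ fun a => ?_
  rw [Measure.map_apply measurable_arg_coe measurableSet_Iic,
    Measure.map_apply measurable_arg_coe measurableSet_Iic]
  change A {y : Circle | arg (y : ℂ) ≤ a} = B {y : Circle | arg (y : ℂ) ≤ a}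
  rcases le_or_gt π a with ha | ha
  · have : {y : Circle | arg (y : ℂ) ≤ a} = univ :=
      eq_univ_of_forall fun y => (arg_le_pi _).trans ha
    rwa [this]
  rcases le_or_gt a (-π) with ha' | ha'
  · have : {y : Circle | arg (y : ℂ) ≤ a} = ∅ :=
      eq_empty_of_forall_notMem fun y hy => (neg_pi_lt_arg _).not_ge (hy.trans ha')
    rw [this, measure_empty, measure_empty]
  have hmem : (-1 : Circle) ∈ {y | dS1 (Circle.exp ((a - π) / 2)) y ≤ (a + π) / 2} := by
    have hc : |(a - π) / 2 - 0| ≤ π := abs_le.mpr ⟨by linarith, by linarith⟩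
    rw [mem_ofPred_eq, show (-1 : Circle) = antipode (Circle.exp 0) from
        Circle.ext (by rw [coe_antipode, Circle.exp_zero, Circle.coe_neg]),
      dS1_antipode_right, dS1_exp_exp, arccos_cos_eq_abs hc, abs_of_neg (by linarith)]
    linarith
  have hsing : ({-1} : Set Circle) = {y | dS1 (-1) y ≤ 0} := by
    ext y
    simp [dS1_le_zero_iff]
  rw [setOf_arg_le_eq ha' ha,
    measure_sdiff (singleton_subset_iff.mpr hmem) (measurableSet_singleton _).nullMeasurableSet
      (measure_ne_top _ _),
    measure_sdiff (singleton_subset_iff.mpr hmem) (measurableSet_singleton _).nullMeasurableSet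
      (measure_ne_top _ _),
    hsing, hball _ _ ⟨by linarith, by linarith⟩,
    hball _ _ ⟨le_rfl, Real.pi_pos⟩]

lemma eq_of_integral_dS1_eq (hT : A.map antipode + A = B.map antipode + B)
    (hd : ∀ z, ∫ y, dS1 z y ∂A = ∫ y, dS1 z y ∂B) : A = B := by
  refine eq_of_measure_dS1_le_eq ?_ fun x r hr => ?_
  · have h := congrArg (fun μ : Measure Circle => μ univ) hT
    simp only [Measure.add_apply, Measure.map_apply measurable_antipode MeasurableSet.univ,
      preimage_univ, ← two_mul] at h
    exact (ENNReal.mul_right_inj two_ne_zero ENNReal.ofNat_ne_top).mp h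
  · exact measure_le_eq_of_integral_max_sub_eq (continuous_dS1 x).measurable (dS1_nonneg x) hr.2
      fun t ht => integral_tent_eq_of_integral_dS1_eq hT hd x (hr.1.trans ht.1) ht.2

end FiniteMeasure

lemma eq_of_sInt_dS1_eq {lam eta : SignedMeasure Circle} (hlam : lam.map antipode = -lam)
    (heta : eta.map antipode = -eta) (h : ∀ x, sInt lam (dS1 x) = sInt eta (dS1 x)) :
    lam = eta := by
  set p₁ := lam.toJordanDecomposition.posPart
  set n₁ := lam.toJordanDecomposition.negPart
  set p₂ := eta.toJordanDecomposition.posPart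
  set n₂ := eta.toJordanDecomposition.negPart
  have hT : (p₁ + n₂).map antipode + (p₁ + n₂) = (p₂ + n₁).map antipode + (p₂ + n₁) := by
    have h₁ := map_posPart_add_posPart_of_map_eq_neg measurable_antipode hlam
    have h₂ := map_posPart_add_posPart_of_map_eq_neg measurable_antipode heta
    rw [Measure.map_add _ _ measurable_antipode, Measure.map_add _ _ measurable_antipode,
      add_add_add_comm, add_add_add_comm (p₂.map _), h₁, ← h₂, add_comm]
  have hd : ∀ z, ∫ y, dS1 z y ∂(p₁ + n₂) = ∫ y, dS1 z y ∂(p₂ + n₁) := fun z => by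
    have := h z
    rw [sInt, sInt] at this
    rw [integral_add_measure (integrable_of_continuous (continuous_dS1 z) _)
        (integrable_of_continuous (continuous_dS1 z) _),
      integral_add_measure (integrable_of_continuous (continuous_dS1 z) _)
        (integrable_of_continuous (continuous_dS1 z) _)]
    linarith
  have hAB := Measure.toSignedMeasure_eq_toSignedMeasure_iff.mpr (eq_of_integral_dS1_eq hT hd)
  rw [Measure.toSignedMeasure_add, Measure.toSignedMeasure_add, ← sub_eq_sub_iff_add_eq_add,
    lam.posPart_sub_negPart, eta.posPart_sub_negPart] at hAB
  exact hAB

/-- If `T_#λ = -λ`, `T_#η = -η` and `f_{λ + C·H¹} = f_{η + C·H¹}`,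
then `λ = η`. -/
theorem stmt2 (C : ℝ) (lam eta : SignedMeasure Circle)
    (hlam : lam.map antipode = -lam) (heta : eta.map antipode = -eta)
    (h : ∀ x : Circle,
      fRep (lam + C • hausOne.toSignedMeasure) x = fRep (eta + C • hausOne.toSignedMeasure) x) :
    lam = eta := by
  refine eq_of_sInt_dS1_eq hlam heta fun x => ?_
  have hx := h x
  rwa [fRep, fRep, sInt_add _ _ (continuous_dS1 x), sInt_add _ _ (continuous_dS1 x),
    add_left_inj] at hx

end CirclePaper
end
end

section
/- Let h : ℝ → ℝ be Lipschitz continuous, left-differentiable at every point (with left derivative ∂₋h), and suppose ∂₋h has finite total variation on [−π, π]. Then the restriction of h to [−π, π] can be written as the difference of two convex functions, and ∂₋h is left-continuous on (−π, π]. -/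
/-!
A Lipschitz function is continuous, so the fundamental theorem of calculus for left derivatives
gives `h t = h (-π) + ∫_{-π}^t ∂₋h` on `[-π, π]`. Writing the bounded-variation function `∂₋h`
as a difference `p - q` of monotone functions splits `h` into the primitives of `p` and `q`,
which are convex. A function of bounded variation has a left limit `L` at every point, and the
integral representation makes `L` a left derivative of `h` there, so `L = ∂₋h t`.
-/

open MeasureTheory Real Filter Set Complex
open scoped ENNReal NNReal Classical

noncomputable section

namespace CirclePaper

open Topology

theorem hasLeftDerivAtR_iff_hasDerivWithinAt {f : ℝ → ℝ} {L t : ℝ} :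
    HasLeftDerivAtR f L t ↔ HasDerivWithinAt f L (Iio t) t := by
  have hmap : map (t + ·) (𝓝[<] (0 : ℝ)) = 𝓝[<] t := by simp
  rw [hasDerivWithinAt_iff_tendsto_slope' self_notMem_Iio, ← hmap, tendsto_map'_iff,
    HasLeftDerivAtR]
  refine tendsto_congr fun s => ?_
  simp [slope_def_field]

theorem _root_.intervalIntegral.integral_eq_sub_of_hasDeriv_left_of_le {E : Type*}
    [NormedAddCommGroup E] [NormedSpace ℝ E] [CompleteSpace E] {f f' : ℝ → E} {a b : ℝ}
    (hab : a ≤ b) (hcont : ContinuousOn f (Icc a b))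
    (hderiv : ∀ x ∈ Ioo a b, HasDerivWithinAt f (f' x) (Iio x) x)
    (hint : IntervalIntegrable f' volume a b) : ∫ y in a..b, f' y = f b - f a := by
  have hderiv_neg :
      ∀ x ∈ Ioo (-b) (-a), HasDerivWithinAt (f ∘ Neg.neg) (-f' (-x)) (Ioi x) x := by
    intro x hx
    simpa using (hderiv (-x) ⟨lt_neg.1 hx.2, neg_lt.1 hx.1⟩).scomp x
      (hasDerivAt_neg x).hasDerivWithinAt fun y hy => neg_lt_neg (mem_Ioi.1 hy)
  have := intervalIntegral.integral_eq_sub_of_hasDeriv_right_of_le (neg_le_neg hab)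
    (hcont.comp continuous_neg.continuousOn fun x hx => ⟨le_neg.1 hx.2, neg_le.1 hx.1⟩)
    hderiv_neg ((IntervalIntegrable.iff_comp_neg (f := f')).1 hint).neg.symm
  rw [intervalIntegral.integral_neg, intervalIntegral.integral_comp_neg] at this
  simpa [neg_eq_iff_eq_neg] using this

theorem _root_.BoundedVariationOn.intervalIntegrable {f : ℝ → ℝ} {a b : ℝ}
    (hf : BoundedVariationOn f (uIcc a b)) : IntervalIntegrable f volume a b := by
  obtain ⟨p, q, hp, hq, rfl⟩ := hf.locallyBoundedVariationOn.exists_monotoneOn_sub_monotoneOn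
  exact hp.intervalIntegrable.sub hq.intervalIntegrable

theorem _root_.MonotoneOn.convexOn_intervalIntegral {p : ℝ → ℝ} {a b : ℝ}
    (hp : MonotoneOn p (Icc a b)) : ConvexOn ℝ (Icc a b) (fun t => ∫ u in a..t, p u) := by
  have hint : ∀ x ∈ Icc a b, ∀ y ∈ Icc a b, IntervalIntegrable p volume x y := fun x hx y hy =>
    (hp.mono (uIcc_subset_Icc hx hy)).intervalIntegrable
  refine convexOn_of_slope_mono_adjacent (convex_Icc a b) fun {x y z} hx hz hxy hyz => ?_
  have hy : y ∈ Icc a b := ⟨hx.1.trans hxy.le, hyz.le.trans hz.2⟩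
  have ha : a ∈ Icc a b := left_mem_Icc.2 (hx.1.trans hx.2)
  rw [intervalIntegral.integral_interval_sub_left (hint a ha y hy) (hint a ha x hx),
    intervalIntegral.integral_interval_sub_left (hint a ha z hz) (hint a ha y hy)]
  have hleft : (∫ u in x..y, p u) ≤ (y - x) * p y := by
    simpa using intervalIntegral.integral_mono_on hxy.le (hint x hx y hy)
      intervalIntegrable_const fun u hu => hp ⟨hx.1.trans hu.1, hu.2.trans hy.2⟩ hy hu.2
  have hright : (z - y) * p y ≤ ∫ u in y..z, p u := by
    simpa using intervalIntegral.integral_mono_on hyz.le intervalIntegrable_const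
      (hint y hy z hz) fun u hu => hp hy ⟨hy.1.trans hu.1, hu.2.trans hz.2⟩ hu.1
  calc (∫ u in x..y, p u) / (y - x) ≤ p y := by rwa [div_le_iff₀ (sub_pos.2 hxy), mul_comm]
    _ ≤ (∫ u in y..z, p u) / (z - y) := by rwa [le_div_iff₀ (sub_pos.2 hyz), mul_comm]

theorem exists_convexOn_sub_convexOn_of_integral_eq {f g : ℝ → ℝ} {a b : ℝ}
    (hg : BoundedVariationOn g (Icc a b))
    (hf : ∀ t ∈ Icc a b, ∫ u in a..t, g u = f t - f a) :
    ∃ φ ψ : ℝ → ℝ, ConvexOn ℝ (Icc a b) φ ∧ ConvexOn ℝ (Icc a b) ψ ∧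
      ∀ t ∈ Icc a b, f t = φ t - ψ t := by
  obtain ⟨p, q, hp, hq, rfl⟩ := hg.locallyBoundedVariationOn.exists_monotoneOn_sub_monotoneOn
  refine ⟨fun t => f a + ∫ u in a..t, p u, fun t => ∫ u in a..t, q u,
    (convexOn_const _ (convex_Icc a b)).add hp.convexOn_intervalIntegral,
    hq.convexOn_intervalIntegral, fun t ht => ?_⟩
  have hsub : uIcc a t ⊆ Icc a b := uIcc_subset_Icc (left_mem_Icc.2 (ht.1.trans ht.2)) ht
  have hft : (∫ u in a..t, p u) - ∫ u in a..t, q u = f t - f a := by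
    rw [← intervalIntegral.integral_sub (hp.mono hsub).intervalIntegrable
      (hq.mono hsub).intervalIntegrable]
    exact hf t ht
  dsimp only
  linarith

theorem _root_.BoundedVariationOn.continuousWithinAt_Iio_of_integral_eq {f g : ℝ → ℝ}
    {a b t : ℝ} (hg : BoundedVariationOn g (Icc a b))
    (hf : ∀ u ∈ Icc a b, ∫ x in a..u, g x = f u - f a) (ht : t ∈ Ioc a b)
    (hderiv : HasDerivWithinAt f (g t) (Iio t) t) : ContinuousWithinAt g (Iio t) t := by
  have hIoo : Ioo a t ∈ 𝓝[<] t := Ioo_mem_nhdsLT ht.1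
  obtain ⟨L, hL⟩ := hg.exists_tendsto_left t
  rw [nhdsWithin_inter_of_mem (mem_of_superset hIoo
    (Ioo_subset_Icc_self.trans (Icc_subset_Icc le_rfl ht.2)))] at hL
  have hint : IntervalIntegrable g volume a t := (hg.mono
    (uIcc_subset_Icc (left_mem_Icc.2 (ht.1.le.trans ht.2)) ⟨ht.1.le, ht.2⟩)).intervalIntegrable
  have hae : 𝓝[≤] t ⊓ ae volume ≤ 𝓝[<] t := by
    refine le_inf (inf_le_left.trans nhdsWithin_le_nhds) (le_principal_iff.2 ?_)
    exact mem_of_superset (inter_mem_inf self_mem_nhdsWithin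
      (compl_mem_ae_iff.2 (measure_singleton t))) fun x hx => lt_of_le_of_ne hx.1 hx.2
  have hF : HasDerivWithinAt (fun u => ∫ x in a..u, g x) L (Iic t) t :=
    intervalIntegral.integral_hasDerivWithinAt_of_tendsto_ae_right hint
      ⟨Ioc a t, Ioc_mem_nhdsLE ht.1, hint.1.aestronglyMeasurable⟩ (hL.mono_left hae)
  have hfL : HasDerivWithinAt (fun u => f u - f a) L (Iio t) t := by
    refine (hF.mono Iio_subset_Iic_self).congr_of_eventuallyEq ?_ ?_
    · filter_upwards [hIoo] with u hu using (hf u ⟨hu.1.le, hu.2.le.trans ht.2⟩).symm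
    · exact (hf t ⟨ht.1.le, ht.2⟩).symm
  rwa [ContinuousWithinAt, (uniqueDiffWithinAt_Iio t).eq_deriv _ hderiv
    ((hasDerivWithinAt_sub_const_iff _).1 hfL)]

/-- If `h : ℝ → ℝ` is Lipschitz, left-differentiable everywhere with left
derivative `∂₋h` of finite total variation on `[-π, π]`, then `h|_{[-π,π]}` is a difference
of two convex functions and `∂₋h` is left-continuous on `(-π, π]`. -/
theorem stmt9 (h : ℝ → ℝ) (hLip : ∃ K : ℝ≥0, LipschitzWith K h)
    (h' : ℝ → ℝ) (hderiv : ∀ t : ℝ, HasLeftDerivAtR h (h' t) t)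
    (hTV : eVariationOn h' (Set.Icc (-π) π) ≠ ⊤) :
    (∃ φ ψ : ℝ → ℝ, ConvexOn ℝ (Set.Icc (-π) π) φ ∧ ConvexOn ℝ (Set.Icc (-π) π) ψ ∧
      ∀ t ∈ Set.Icc (-π) π, h t = φ t - ψ t) ∧
    ∀ t ∈ Set.Ioc (-π) π, Filter.Tendsto h' (nhdsWithin t (Set.Iio t)) (nhds (h' t)) := by
  obtain ⟨_, hLip⟩ := hLip
  have hBV : BoundedVariationOn h' (Icc (-π) π) := hTV
  have hleft : ∀ t, HasDerivWithinAt h (h' t) (Iio t) t := fun t =>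
    hasLeftDerivAtR_iff_hasDerivWithinAt.1 (hderiv t)
  have hftc : ∀ t ∈ Icc (-π) π, ∫ u in (-π)..t, h' u = h t - h (-π) := fun t ht =>
    intervalIntegral.integral_eq_sub_of_hasDeriv_left_of_le ht.1 hLip.continuous.continuousOn
      (fun x _ => hleft x)
      (hBV.mono (uIcc_subset_Icc (left_mem_Icc.2 (ht.1.trans ht.2)) ht)).intervalIntegrable
  exact ⟨exists_convexOn_sub_convexOn_of_integral_eq hBV hftc,
    fun t ht => hBV.continuousWithinAt_Iio_of_integral_eq hftc ht (hleft t)⟩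

end CirclePaper
end
end
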